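/- The function g is prox-regular (with parameter r = 0) at every point of Ω: for every x̄ ∈ Ω and every v̄ ∈ N_{Π(x̄)}(x̄), there exists ε > 0 such that g(x′) ≥ g(x) + ⟨v, x′ − x⟩ whenever x′ ∈ ℝⁿ with ‖x′ − x̄‖ ≤ ε, x ∈ Ω with ‖x − x̄‖ < ε and g(x) < g(x̄) + ε, and v ∈ N_{Π(x)}(x) with ‖v − v̄‖ < ε. (Here N_{Π(x)}(x) coincides with the limiting subdifferential ∂g(x) for x ∈ Ω.) -/

import Mathlib

/-!
Near `x̄` the supports of `x` and `Bx` can only grow, so `g` is locally bounded below by `g(x̄)`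
and every strict growth of a support raises `g` by at least `min λ₁ λ₂`. Hence a point `x` near
`x̄` with `g(x) < g(x̄) + ε` has exactly the supports of `x̄`, so `Π(x) = Π(x̄)`. For `x'` near `x̄`
either `x' ∈ Π(x)`, where the normal cone inequality gives `⟨v, x' - x⟩ ≤ 0 = g(x') - g(x)`,
or `g(x') - g(x) ≥ min λ₁ λ₂`, which dominates `⟨v, x' - x⟩ ≤ ‖v‖‖x' - x‖` once `ε` is small.
-/

open scoped Classical

noncomputable section

/-- The box `Ω = {x : l ≤ x ≤ u}` in ℝⁿ. -/
def Om {n : ℕ} (l u : Fin n → ℝ) : Set (EuclideanSpace ℝ (Fin n)) :=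
  {x | ∀ i, l i ≤ x i ∧ x i ≤ u i}

/-- The ℓ₀-norm (number of nonzero entries) of a vector. -/
def zeroNorm {m : ℕ} (v : Fin m → ℝ) : ℕ := (Function.support v).ncard

/-- `g(x) = λ₁‖Bx‖₀ + λ₂‖x‖₀ + δ_Ω(x)` as an extended-real-valued function. -/
def gfun {n p : ℕ} (B : Matrix (Fin p) (Fin n) ℝ) (lam1 lam2 : ℝ) (l u : Fin n → ℝ)
    (x : EuclideanSpace ℝ (Fin n)) : EReal :=
  if x ∈ Om l u then
    ((lam1 * (zeroNorm (B.mulVec x) : ℝ) + lam2 * (zeroNorm x : ℝ) : ℝ) : EReal)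
  else ⊤

/-- `Π(z) = {x ∈ Ω : supp(x) ⊆ supp(z), supp(Bx) ⊆ supp(Bz)}`. -/
def PiSet {n p : ℕ} (B : Matrix (Fin p) (Fin n) ℝ) (l u : Fin n → ℝ)
    (z : EuclideanSpace ℝ (Fin n)) : Set (EuclideanSpace ℝ (Fin n)) :=
  {x | x ∈ Om l u ∧ Function.support x ⊆ Function.support z ∧
    Function.support (B.mulVec x) ⊆ Function.support (B.mulVec z)}

/-- Normal cone of a convex set `S` at `x`. -/
def normalCone {n : ℕ} (S : Set (EuclideanSpace ℝ (Fin n)))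
    (x : EuclideanSpace ℝ (Fin n)) : Set (EuclideanSpace ℝ (Fin n)) :=
  {v | ∀ y ∈ S, (inner ℝ v (y - x) : ℝ) ≤ 0}

open Function Filter Topology

theorem eventually_support_subset {X ι M : Type*} [TopologicalSpace X] [Finite ι] [Zero M]
    [TopologicalSpace M] [T1Space M] {f : X → ι → M} {x₀ : X} (hf : ContinuousAt f x₀) :
    ∀ᶠ y in 𝓝 x₀, support (f x₀) ⊆ support (f y) := by
  have hcoord : ∀ i, ∀ᶠ y in 𝓝 x₀, f x₀ i ≠ 0 → f y i ≠ 0 := fun i => by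
    by_cases h : f x₀ i = 0
    · simp [h]
    · filter_upwards [(tendsto_pi_nhds.1 hf i).eventually_ne h] with y hy using fun _ => hy
  filter_upwards [eventually_all.2 hcoord] with y hy i hi using hy i hi

theorem weighted_ncard_add_min_le {α β : Type*} [Finite α] [Finite β] {a b : ℝ}
    (ha : 0 < a) (hb : 0 < b) {s s' : Set α} {t t' : Set β} (hs : s ⊆ s') (ht : t ⊆ t')
    (hne : ¬(s' ⊆ s ∧ t' ⊆ t)) :
    a * s.ncard + b * t.ncard + min a b ≤ a * s'.ncard + b * t'.ncard := by
  have hs_le : (s.ncard : ℝ) ≤ s'.ncard := by exact_mod_cast Set.ncard_le_ncard hs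
  have ht_le : (t.ncard : ℝ) ≤ t'.ncard := by exact_mod_cast Set.ncard_le_ncard ht
  rcases not_and_or.1 hne with hs' | ht'
  · have : (s.ncard : ℝ) + 1 ≤ s'.ncard := by
      exact_mod_cast Set.ncard_lt_ncard (hs.ssubset_of_not_subset hs')
    nlinarith [min_le_left a b]
  · have : (t.ncard : ℝ) + 1 ≤ t'.ncard := by
      exact_mod_cast Set.ncard_lt_ncard (ht.ssubset_of_not_subset ht')
    nlinarith [min_le_right a b]

theorem inner_sub_le_of_norm_sub_lt {E : Type*} [NormedAddCommGroup E] [InnerProductSpace ℝ E]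
    {x x' xbar v vbar : E} {ε δ : ℝ} (hε1 : ε ≤ 1) (hεδ : 2 * ε * (‖vbar‖ + 1) ≤ δ)
    (hv : ‖v - vbar‖ < ε) (hx : ‖x - xbar‖ < ε) (hx' : ‖x' - xbar‖ ≤ ε) :
    inner ℝ v (x' - x) ≤ δ := by
  have hv_norm : ‖v‖ ≤ ‖vbar‖ + 1 := by linarith [norm_le_norm_add_norm_sub' v vbar]
  have hxx' : ‖x' - x‖ ≤ 2 * ε := by
    calc ‖x' - x‖ = ‖(x' - xbar) - (x - xbar)‖ := by abel_nf
      _ ≤ ‖x' - xbar‖ + ‖x - xbar‖ := norm_sub_le _ _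
      _ ≤ 2 * ε := by linarith
  calc inner ℝ v (x' - x) ≤ ‖v‖ * ‖x' - x‖ := real_inner_le_norm _ _
    _ ≤ (‖vbar‖ + 1) * (2 * ε) := by gcongr
    _ ≤ δ := by linarith

theorem exists_pos_lt_and_mul_le {r δ c : ℝ} (hr : 0 < r) (hδ : 0 < δ) (hc : 0 ≤ c) :
    ∃ ε > 0, ε < r ∧ ε ≤ 1 ∧ 2 * ε * (c + 1) ≤ δ := by
  refine ⟨min (min (r / 2) 1) (δ / (2 * (c + 1))), by positivity,
    (min_le_left _ _).trans_lt ((min_le_left _ _).trans_lt (half_lt_self hr)),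
    (min_le_left _ _).trans (min_le_right _ _), ?_⟩
  have := min_le_right (min (r / 2) 1) (δ / (2 * (c + 1)))
  rw [le_div_iff₀ (by positivity)] at this
  linarith

namespace SparseBox

variable {n p : ℕ} (B : Matrix (Fin p) (Fin n) ℝ)

/-- `PiSet B l u z = {x ∈ Ω | SupportsLE B x z}`. -/
def SupportsLE (x z : EuclideanSpace ℝ (Fin n)) : Prop :=
  support x ⊆ support z ∧ support (B.mulVec x) ⊆ support (B.mulVec z)

theorem eventually_supportsLE (xbar : EuclideanSpace ℝ (Fin n)) :
    ∀ᶠ y in 𝓝 xbar, SupportsLE B xbar y := by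
  have hcont : Continuous fun y : EuclideanSpace ℝ (Fin n) => (y : Fin n → ℝ) :=
    PiLp.continuous_ofLp 2 _
  have hBcont : Continuous fun y : EuclideanSpace ℝ (Fin n) => B.mulVec y :=
    continuous_const.matrix_mulVec hcont
  filter_upwards [eventually_support_subset hcont.continuousAt,
    eventually_support_subset hBcont.continuousAt] with y hy hBy using ⟨hy, hBy⟩

variable (lam1 lam2 : ℝ)

def cost (x : EuclideanSpace ℝ (Fin n)) : ℝ :=
  lam1 * zeroNorm (B.mulVec x) + lam2 * zeroNorm x

theorem gfun_of_mem {l u : Fin n → ℝ} {x : EuclideanSpace ℝ (Fin n)} (hx : x ∈ Om l u) :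
    gfun B lam1 lam2 l u x = cost B lam1 lam2 x := by
  rw [gfun, if_pos hx, cost]

theorem gfun_of_not_mem {l u : Fin n → ℝ} {x : EuclideanSpace ℝ (Fin n)} (hx : x ∉ Om l u) :
    gfun B lam1 lam2 l u x = ⊤ :=
  if_neg hx

variable {B lam1 lam2}

theorem cost_add_min_le (hlam1 : 0 < lam1) (hlam2 : 0 < lam2) {x y : EuclideanSpace ℝ (Fin n)}
    (hxy : SupportsLE B x y) (hyx : ¬SupportsLE B y x) :
    cost B lam1 lam2 x + min lam1 lam2 ≤ cost B lam1 lam2 y :=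
  weighted_ncard_add_min_le hlam1 hlam2 hxy.2 hxy.1 (fun h => hyx ⟨h.2, h.1⟩)

theorem cost_eq_of_supportsLE {x y : EuclideanSpace ℝ (Fin n)}
    (hxy : SupportsLE B x y) (hyx : SupportsLE B y x) :
    cost B lam1 lam2 x = cost B lam1 lam2 y := by
  rw [cost, cost, zeroNorm, zeroNorm, zeroNorm, zeroNorm, hxy.1.antisymm hyx.1,
    hxy.2.antisymm hyx.2]

theorem piSet_eq_of_supportsLE {l u : Fin n → ℝ} {x y : EuclideanSpace ℝ (Fin n)}
    (hxy : SupportsLE B x y) (hyx : SupportsLE B y x) :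
    PiSet B l u x = PiSet B l u y := by
  rw [PiSet, PiSet, hxy.1.antisymm hyx.1, hxy.2.antisymm hyx.2]

/-- Either `x'` lies in `Π(x̄)`, where the normal cone inequality applies at equal cost, or its
cost has jumped by at least `min λ₁ λ₂`, which pays for the inner product. -/
theorem cost_add_inner_le (hlam1 : 0 < lam1) (hlam2 : 0 < lam2) {l u : Fin n → ℝ}
    {x xbar x' v : EuclideanSpace ℝ (Fin n)} (hxxbar : SupportsLE B x xbar)
    (hxbarx : SupportsLE B xbar x) (hv : v ∈ normalCone (PiSet B l u xbar) x)
    (hx' : x' ∈ Om l u) (hxbarx' : SupportsLE B xbar x')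
    (hinner : inner ℝ v (x' - x) ≤ min lam1 lam2) :
    cost B lam1 lam2 x + inner ℝ v (x' - x) ≤ cost B lam1 lam2 x' := by
  rw [cost_eq_of_supportsLE (lam1 := lam1) (lam2 := lam2) hxxbar hxbarx]
  by_cases hx'xbar : SupportsLE B x' xbar
  · have hv_nonpos : inner ℝ v (x' - x) ≤ 0 := hv x' ⟨hx', hx'xbar.1, hx'xbar.2⟩
    linarith [cost_eq_of_supportsLE (lam1 := lam1) (lam2 := lam2) hxbarx' hx'xbar]
  · linarith [cost_add_min_le hlam1 hlam2 hxbarx' hx'xbar]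

end SparseBox

open SparseBox

theorem stmt1 {n p : ℕ} (B : Matrix (Fin p) (Fin n) ℝ) (lam1 lam2 : ℝ)
    (hlam1 : 0 < lam1) (hlam2 : 0 < lam2)
    (l u : Fin n → ℝ)
    (xbar : EuclideanSpace ℝ (Fin n)) (hxbar : xbar ∈ Om l u)
    (vbar : EuclideanSpace ℝ (Fin n)) :
    ∃ ε > (0 : ℝ), ∀ x ∈ Om l u, ‖x - xbar‖ < ε →
      gfun B lam1 lam2 l u x < gfun B lam1 lam2 l u xbar + (ε : EReal) →
      ∀ v ∈ normalCone (PiSet B l u x) x, ‖v - vbar‖ < ε →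
      ∀ x' : EuclideanSpace ℝ (Fin n), ‖x' - xbar‖ ≤ ε →
      gfun B lam1 lam2 l u x + (((inner ℝ v (x' - x) : ℝ)) : EReal) ≤ gfun B lam1 lam2 l u x' := by
  obtain ⟨r, hr, hsupp⟩ := Metric.eventually_nhds_iff.1 (eventually_supportsLE B xbar)
  obtain ⟨ε, hε, hεr, hε1, hεδ⟩ :=
    exists_pos_lt_and_mul_le hr (lt_min hlam1 hlam2) (norm_nonneg vbar)
  refine ⟨ε, hε, fun x hx hxnear hglt v hv hvnear x' hx'near => ?_⟩
  have hxbarx : SupportsLE B xbar x := hsupp (by rw [dist_eq_norm]; linarith)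
  -- `g(x) < g(x̄) + ε < g(x̄) + min λ₁ λ₂` rules out a jump of the cost
  have hxxbar : SupportsLE B x xbar := by
    by_contra hjump
    rw [gfun_of_mem B lam1 lam2 hx, gfun_of_mem B lam1 lam2 hxbar] at hglt
    have hcost := cost_add_min_le hlam1 hlam2 hxbarx hjump
    have hε_lt : ε < min lam1 lam2 := by nlinarith [norm_nonneg vbar]
    norm_cast at hglt
    linarith
  by_cases hx' : x' ∈ Om l u
  · rw [piSet_eq_of_supportsLE hxxbar hxbarx] at hv
    rw [gfun_of_mem B lam1 lam2 hx, gfun_of_mem B lam1 lam2 hx']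
    exact_mod_cast cost_add_inner_le hlam1 hlam2 hxxbar hxbarx hv hx'
      (hsupp (by rw [dist_eq_norm]; linarith))
      (inner_sub_le_of_norm_sub_lt hε1 hεδ hvnear hxnear hx'near)
  · rw [gfun_of_not_mem B lam1 lam2 hx']
    exact le_top
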